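/- The sectional curvatures of G(d) satisfy, with β* := ℓ^{-1}∘β: (i) if x,y ∈ d are orthogonal with ⟨x,x⟩_d = ε1 = ±1 and ⟨y,y⟩_d = ε2 = ±1, then K(x,y) := ε1ε2⟨R(x,y)y, x⟩ = ε1ε2(¼⟨[x,y]_d, [x,y]_d⟩_d − ¾⟨β*(x,y), β*(x,y)⟩_h); (ii) if x ∈ d and h ∈ h with ⟨x,x⟩_d = ε1 = ±1 and ⟨h,h⟩_h = ε2 = ±1, then K(x, ℓ(h)) := ε1ε2⟨R(x,ℓ(h))ℓ(h), x⟩ = (ε1ε2/4)⟨π(h)x, π(h)x⟩_d; (iii) for any u,v ∈ h*, ⟨R(u,v)v, u⟩ = 0. -/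

import Mathlib

open Module

variable {H D : Type} [LieRing H] [LieAlgebra ℝ H] [FiniteDimensional ℝ H]
  [LieRing D] [LieAlgebra ℝ D] [FiniteDimensional ℝ D]

/-- `beta BD π x y` is the element `β(x,y)` of `h*` given by `a ↦ ⟨π(a)x, y⟩_d`. -/
def beta (BD : LinearMap.BilinForm ℝ D) (π : H →ₗ[ℝ] D →ₗ[ℝ] D) (x y : D) : Dual ℝ H :=
  (BD.flip y).comp (π.flip x)

/-- The bracket on `G(d) = d ⊕ h*`: `[x₁+α₁, x₂+α₂] = [x₁,x₂]_d + β(x₁,x₂)`. -/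
def gbr (BD : LinearMap.BilinForm ℝ D) (π : H →ₗ[ℝ] D →ₗ[ℝ] D)
    (u v : D × Dual ℝ H) : D × Dual ℝ H :=
  (⁅u.1, v.1⁆, beta BD π u.1 v.1)

/-- The inverse of the isomorphism `ℓ : h → h*`, `ℓ(h) = ⟨h,·⟩_h`. -/
noncomputable def ellInv (BH : LinearMap.BilinForm ℝ H) (hBH : BH.Nondegenerate)
    (α : Dual ℝ H) : H :=
  (LinearMap.BilinForm.toDual BH hBH).symm α

/-- The metric on `G(d)`: `⟨x₁ + ℓ(h₁), x₂ + ℓ(h₂)⟩ = ⟨h₁,h₂⟩_h + ⟨x₁,x₂⟩_d`. -/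
noncomputable def gform (BH : LinearMap.BilinForm ℝ H) (hBH : BH.Nondegenerate)
    (BD : LinearMap.BilinForm ℝ D) (u v : D × Dual ℝ H) : ℝ :=
  BD u.1 v.1 + BH (ellInv BH hBH u.2) (ellInv BH hBH v.2)

/-- The Levi-Civita connection
`∇_{x₁+ℓ(h₁)}(x₂+ℓ(h₂)) = ½([x₁,x₂]_d + β(x₁,x₂) − π(h₁)x₂ − π(h₂)x₁)`. -/
noncomputable def nabG (BH : LinearMap.BilinForm ℝ H) (hBH : BH.Nondegenerate)
    (BD : LinearMap.BilinForm ℝ D) (π : H →ₗ[ℝ] D →ₗ[ℝ] D)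
    (u v : D × Dual ℝ H) : D × Dual ℝ H :=
  ((2⁻¹ : ℝ) • (⁅u.1, v.1⁆ - π (ellInv BH hBH u.2) v.1 - π (ellInv BH hBH v.2) u.1),
   (2⁻¹ : ℝ) • beta BD π u.1 v.1)

/-- The curvature `R(w₁,w₂)w₃ = ∇_{w₁}∇_{w₂}w₃ − ∇_{w₂}∇_{w₁}w₃ − ∇_{[w₁,w₂]}w₃`. -/
noncomputable def Rfun (BH : LinearMap.BilinForm ℝ H) (hBH : BH.Nondegenerate)
    (BD : LinearMap.BilinForm ℝ D) (π : H →ₗ[ℝ] D →ₗ[ℝ] D)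
    (w₁ w₂ w₃ : D × Dual ℝ H) : D × Dual ℝ H :=
  nabG BH hBH BD π w₁ (nabG BH hBH BD π w₂ w₃)
    - nabG BH hBH BD π w₂ (nabG BH hBH BD π w₁ w₃)
    - nabG BH hBH BD π (gbr BD π w₁ w₂) w₃

/-- `β* = ℓ⁻¹ ∘ β : d × d → h`. -/
noncomputable def betaStar (BH : LinearMap.BilinForm ℝ H) (hBH : BH.Nondegenerate)
    (BD : LinearMap.BilinForm ℝ D) (π : H →ₗ[ℝ] D →ₗ[ℝ] D) (x y : D) : H :=
  ellInv BH hBH (beta BD π x y)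

/-!
The curvatures are computed directly from the explicit connection. For `x, y ∈ d` and
`b = β*(x,y)`, the `d`-component of `R(x,y)y` is `-¼[y,[x,y]] - ½[[x,y],y] + ¾π(b)y`;
ad-invariance turns both bracket terms into multiples of `⟨[x,y],[x,y]⟩_d`, and skew-symmetry of
`π(b)` turns the last one into `-¾⟨b,b⟩_h`. For `x ∈ d` and `h ∈ h` one gets
`R(x,ℓ(h))ℓ(h) = -¼π(h)²x`, and on `h*` the connection, hence the curvature, vanishes.
-/

section Curvature

omit [FiniteDimensional ℝ D]

variable (BH : LinearMap.BilinForm ℝ H) (hBH : BH.Nondegenerate) (BD : LinearMap.BilinForm ℝ D)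
  (π : H →ₗ[ℝ] D →ₗ[ℝ] D)

@[simp]
lemma ellInv_zero : ellInv BH hBH 0 = 0 := map_zero _

@[simp]
lemma ellInv_smul (c : ℝ) (α : Dual ℝ H) : ellInv BH hBH (c • α) = c • ellInv BH hBH α :=
  map_smul _ _ _

@[simp]
lemma ellInv_apply_self (h : H) : ellInv BH hBH (BH h) = h := by
  apply (LinearMap.BilinForm.toDual BH hBH).injective
  ext v
  simp [ellInv, LinearMap.BilinForm.toDual_def]

lemma apply_ellInv (α : Dual ℝ H) (v : H) : BH (ellInv BH hBH α) v = α v :=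
  LinearMap.BilinForm.apply_toDual_symm_apply (hB := hBH) α v

section

omit [FiniteDimensional ℝ H]

lemma beta_apply (x y : D) (a : H) : beta BD π x y a = BD (π a x) y := rfl

@[simp]
lemma beta_zero_left (y : D) : beta BD π 0 y = 0 := by
  ext a; simp [beta_apply]

@[simp]
lemma beta_zero_right (x : D) : beta BD π x 0 = 0 := by
  ext a; simp [beta_apply]

lemma beta_self (hBDsymm : ∀ x y : D, BD x y = BD y x)
    (hπskew : ∀ a : H, ∀ x y : D, BD (π a x) y = - BD x (π a y)) (y : D) :
    beta BD π y y = 0 := by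
  ext a
  have := hπskew a y y
  rw [hBDsymm y] at this
  simp only [beta_apply, LinearMap.zero_apply]
  linarith

end

lemma gform_inl_right (u : D × Dual ℝ H) (x : D) : gform BH hBH BD u (x, 0) = BD u.1 x := by
  simp [gform]

lemma nabG_inl_inl (x y : D) :
    nabG BH hBH BD π (x, 0) (y, 0) = ((2⁻¹ : ℝ) • ⁅x, y⁆, (2⁻¹ : ℝ) • beta BD π x y) := by
  simp [nabG]

lemma Rfun_inl_inl_fst (hBDsymm : ∀ x y : D, BD x y = BD y x)
    (hπskew : ∀ a : H, ∀ x y : D, BD (π a x) y = - BD x (π a y)) (x y : D) :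
    (Rfun BH hBH BD π (x, 0) (y, 0) (y, 0)).1 =
      -(4⁻¹ : ℝ) • ⁅y, ⁅x, y⁆⁆ - (2⁻¹ : ℝ) • ⁅⁅x, y⁆, y⁆
        + (3 / 4 : ℝ) • π (betaStar BH hBH BD π x y) y := by
  rw [Rfun, nabG_inl_inl, lie_self, beta_self BD π hBDsymm hπskew, smul_zero, smul_zero]
  simp only [nabG, gbr, betaStar, Prod.fst_sub, ellInv_zero, ellInv_smul, map_zero, map_smul,
    lie_zero, lie_smul, LinearMap.zero_apply, LinearMap.smul_apply, sub_zero, zero_sub, smul_zero]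
  module

lemma gform_Rfun_inl_inl (hBDsymm : ∀ x y : D, BD x y = BD y x)
    (hBDinv : ∀ x y z : D, BD ⁅x, y⁆ z = - BD y ⁅x, z⁆)
    (hπskew : ∀ a : H, ∀ x y : D, BD (π a x) y = - BD x (π a y)) (x y : D) :
    gform BH hBH BD (Rfun BH hBH BD π (x, 0) (y, 0) (y, 0)) (x, 0) =
      4⁻¹ * BD ⁅x, y⁆ ⁅x, y⁆
        - 3 / 4 * BH (betaStar BH hBH BD π x y) (betaStar BH hBH BD π x y) := by
  have hinner : BD ⁅y, ⁅x, y⁆⁆ x = BD ⁅x, y⁆ ⁅x, y⁆ := by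
    rw [hBDinv, ← lie_skew y x, map_neg, neg_neg]
  have houter : BD ⁅⁅x, y⁆, y⁆ x = - BD ⁅x, y⁆ ⁅x, y⁆ := by
    rw [← lie_skew ⁅x, y⁆ y, map_neg, LinearMap.neg_apply, hinner]
  have hπ : BD (π (betaStar BH hBH BD π x y) y) x =
      - BH (betaStar BH hBH BD π x y) (betaStar BH hBH BD π x y) := by
    rw [hπskew, hBDsymm, ← beta_apply, betaStar, apply_ellInv]
  rw [gform_inl_right, Rfun_inl_inl_fst BH hBH BD π hBDsymm hπskew]
  simp only [map_add, map_sub, map_smul, LinearMap.add_apply, LinearMap.sub_apply,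
    LinearMap.smul_apply, smul_eq_mul, hinner, houter, hπ]
  ring

lemma nabG_inl_inr (x : D) (α : Dual ℝ H) :
    nabG BH hBH BD π (x, 0) (0, α) = (-(2⁻¹ : ℝ) • π (ellInv BH hBH α) x, 0) := by
  simp [nabG]

lemma nabG_inr_inl (α : Dual ℝ H) (x : D) :
    nabG BH hBH BD π (0, α) (x, 0) = (-(2⁻¹ : ℝ) • π (ellInv BH hBH α) x, 0) := by
  simp [nabG]

lemma nabG_inr_inr (α γ : Dual ℝ H) : nabG BH hBH BD π (0, α) (0, γ) = (0, 0) := by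
  simp [nabG]

lemma Rfun_inl_inr (x : D) (h : H) :
    Rfun BH hBH BD π (x, 0) (0, BH h) (0, BH h) = (-(4⁻¹ : ℝ) • π h (π h x), 0) := by
  have hbr : gbr BD π (x, 0) (0, BH h) = (0, 0) := by simp [gbr]
  simp only [Rfun, hbr, nabG_inr_inr, nabG_inl_inr, nabG_inr_inl, ellInv_zero,
    ellInv_apply_self]
  ext
  · simp only [Prod.fst_sub, map_zero, LinearMap.zero_apply, map_smul]
    module
  · simp

lemma gform_Rfun_inl_inr (hπskew : ∀ a : H, ∀ x y : D, BD (π a x) y = - BD x (π a y))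
    (x : D) (h : H) :
    gform BH hBH BD (Rfun BH hBH BD π (x, 0) (0, BH h) (0, BH h)) (x, 0) =
      4⁻¹ * BD (π h x) (π h x) := by
  rw [gform_inl_right, Rfun_inl_inr, map_smul, LinearMap.smul_apply, hπskew, smul_eq_mul]
  ring

lemma Rfun_inr_inr (α γ δ : Dual ℝ H) :
    Rfun BH hBH BD π (0, α) (0, γ) (0, δ) = 0 := by
  simp only [Rfun, gbr, lie_zero, beta_zero_left, nabG_inr_inr]
  simp

end Curvature

theorem sectional_curvature_formulas_general
    (BH : LinearMap.BilinForm ℝ H)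
    (hBHnd : BH.Nondegenerate)
    (BD : LinearMap.BilinForm ℝ D)
    (hBDsymm : ∀ x y : D, BD x y = BD y x)
    (hBDinv : ∀ x y z : D, BD ⁅x, y⁆ z = - BD y ⁅x, z⁆)
    (π : H →ₗ[ℝ] D →ₗ[ℝ] D)
    (hπskew : ∀ a : H, ∀ x y : D, BD (π a x) y = - BD x (π a y)) :
    -- (i) K(x,y) for an orthonormal pair x,y ∈ d
    (∀ (x y : D) (ε₁ ε₂ : ℝ), (ε₁ = 1 ∨ ε₁ = -1) → (ε₂ = 1 ∨ ε₂ = -1) →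
      BD x y = 0 → BD x x = ε₁ → BD y y = ε₂ →
      ε₁ * ε₂ * gform BH hBHnd BD (Rfun BH hBHnd BD π (x, 0) (y, 0) (y, 0)) (x, 0)
        = ε₁ * ε₂ * ((4⁻¹ : ℝ) * BD ⁅x, y⁆ ⁅x, y⁆
            - (3 / 4 : ℝ) * BH (betaStar BH hBHnd BD π x y) (betaStar BH hBHnd BD π x y))) ∧
    -- (ii) K(x, ℓ(h)) for unit x ∈ d and unit h ∈ h
    (∀ (x : D) (h : H) (ε₁ ε₂ : ℝ), (ε₁ = 1 ∨ ε₁ = -1) → (ε₂ = 1 ∨ ε₂ = -1) →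
      BD x x = ε₁ → BH h h = ε₂ →
      ε₁ * ε₂ * gform BH hBHnd BD (Rfun BH hBHnd BD π (x, 0) (0, BH h) (0, BH h)) (x, 0)
        = (ε₁ * ε₂ / 4) * BD (π h x) (π h x)) ∧
    -- (iii) ⟨R(u,v)v, u⟩ = 0 for u, v ∈ h*
    (∀ h₁ h₂ : H,
      gform BH hBHnd BD (Rfun BH hBHnd BD π (0, BH h₁) (0, BH h₂) (0, BH h₂)) (0, BH h₁)
        = 0) := by
  refine ⟨fun x y ε₁ ε₂ _ _ _ _ _ => ?_, fun x h ε₁ ε₂ _ _ _ _ => ?_, fun h₁ h₂ => ?_⟩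
  · rw [gform_Rfun_inl_inl BH hBHnd BD π hBDsymm hBDinv hπskew]
  · rw [gform_Rfun_inl_inr BH hBHnd BD π hπskew]
    ring
  · rw [Rfun_inr_inr]
    simp [gform]

/-- The formulas for the sectional curvature of `G(d)`. -/
theorem sectional_curvature_formulas
    (BH : LinearMap.BilinForm ℝ H)
    (hBHsymm : ∀ a b : H, BH a b = BH b a)
    (hBHnd : BH.Nondegenerate)
    (hBHinv : ∀ a b c : H, BH ⁅a, b⁆ c = - BH b ⁅a, c⁆)
    (BD : LinearMap.BilinForm ℝ D)
    (hBDsymm : ∀ x y : D, BD x y = BD y x)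
    (hBDnd : BD.Nondegenerate)
    (hBDinv : ∀ x y z : D, BD ⁅x, y⁆ z = - BD y ⁅x, z⁆)
    (π : H →ₗ[ℝ] D →ₗ[ℝ] D)
    (hπder : ∀ a : H, ∀ x y : D, π a ⁅x, y⁆ = ⁅π a x, y⁆ + ⁅x, π a y⁆)
    (hπhom : ∀ a b : H, π ⁅a, b⁆ = π a ∘ₗ π b - π b ∘ₗ π a)
    (hπskew : ∀ a : H, ∀ x y : D, BD (π a x) y = - BD x (π a y)) :
    -- (i) K(x,y) for an orthonormal pair x,y ∈ d
    (∀ (x y : D) (ε₁ ε₂ : ℝ), (ε₁ = 1 ∨ ε₁ = -1) → (ε₂ = 1 ∨ ε₂ = -1) →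
      BD x y = 0 → BD x x = ε₁ → BD y y = ε₂ →
      ε₁ * ε₂ * gform BH hBHnd BD (Rfun BH hBHnd BD π (x, 0) (y, 0) (y, 0)) (x, 0)
        = ε₁ * ε₂ * ((4⁻¹ : ℝ) * BD ⁅x, y⁆ ⁅x, y⁆
            - (3 / 4 : ℝ) * BH (betaStar BH hBHnd BD π x y) (betaStar BH hBHnd BD π x y))) ∧
    -- (ii) K(x, ℓ(h)) for unit x ∈ d and unit h ∈ h
    (∀ (x : D) (h : H) (ε₁ ε₂ : ℝ), (ε₁ = 1 ∨ ε₁ = -1) → (ε₂ = 1 ∨ ε₂ = -1) →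
      BD x x = ε₁ → BH h h = ε₂ →
      ε₁ * ε₂ * gform BH hBHnd BD (Rfun BH hBHnd BD π (x, 0) (0, BH h) (0, BH h)) (x, 0)
        = (ε₁ * ε₂ / 4) * BD (π h x) (π h x)) ∧
    -- (iii) ⟨R(u,v)v, u⟩ = 0 for u, v ∈ h*
    (∀ h₁ h₂ : H,
      gform BH hBHnd BD (Rfun BH hBHnd BD π (0, BH h₁) (0, BH h₂) (0, BH h₂)) (0, BH h₁)
        = 0) :=
  sectional_curvature_formulas_general BH hBHnd BD hBDsymm hBDinv π hπskew
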